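/- arXiv:math/0501514 — 3 statements merged into one kernel-verified Lean document; each statement's English description precedes it below -/
import Mathlib

section
/- If the first Hochschild cohomology group H¹_k(R, End(M)) vanishes, then M is rigid: every formal deformation of M is equivalent to the trivial deformation ξ. -/
open PowerSeries Finset

/-!
Put `d r = ∑ Dₙ(r) tⁿ` and measure how far a series `ψ` is from intertwining `ξ` with `d` by the
defect `d r * ψ - ψ * ξ r`. If `tⁿ` divides the defect for every `r`, multiplicativity of `d` makes
its `tⁿ`-coefficient a Hochschild 1-cocycle; as `H¹ = 0` it is the coboundary of some `φ`, and
`ψ - φ tⁿ` has defect divisible by `tⁿ⁺¹`. Starting from `ψ = 1`, these corrections converge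
`t`-adically to an intertwiner with constant term `1`.
-/

namespace PowerSeries

variable {A : Type*} [Ring A] {n : ℕ} {f : A⟦X⟧}

theorem X_pow_dvd_mul_left (hf : X ^ n ∣ f) (g : A⟦X⟧) : X ^ n ∣ g * f := by
  obtain ⟨h, rfl⟩ := hf
  exact ⟨g * h, by rw [← mul_assoc, (commute_X_pow g n).eq, mul_assoc]⟩

theorem coeff_mul_of_X_pow_dvd (hf : X ^ n ∣ f) (g : A⟦X⟧) :
    coeff n (g * f) = constantCoeff g * coeff n f := by
  obtain ⟨h, rfl⟩ := hf
  have coeff_X_pow_mul_self : ∀ p : A⟦X⟧, coeff n (X ^ n * p) = constantCoeff p := fun p => by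
    simpa using coeff_X_pow_mul p n 0
  rw [← mul_assoc, (commute_X_pow g n).eq, mul_assoc, coeff_X_pow_mul_self, coeff_X_pow_mul_self,
    map_mul]

theorem X_pow_succ_dvd_of_coeff_eq_zero (hf : X ^ n ∣ f) (hn : coeff n f = 0) :
    X ^ (n + 1) ∣ f := by
  rw [X_pow_dvd_iff] at hf ⊢
  intro m hm
  rcases Nat.lt_succ_iff_lt_or_eq.mp hm with hm | rfl
  exacts [hf m hm, hn]

theorem X_pow_dvd_monomial (n : ℕ) (a : A) : X ^ n ∣ monomial n a :=
  ⟨C a, by rw [monomial_eq_C_mul_X_pow, (commute_X_pow _ n).eq]⟩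

theorem eq_zero_of_forall_X_pow_dvd (hf : ∀ n, X ^ n ∣ f) : f = 0 :=
  ext fun n => X_pow_dvd_iff.mp (hf (n + 1)) n n.lt_succ_self

theorem exists_X_pow_dvd_sub_of_X_pow_dvd_succ_sub (s : ℕ → A⟦X⟧)
    (hs : ∀ n, X ^ (n + 1) ∣ s (n + 1) - s n) : ∃ L, ∀ n, X ^ (n + 1) ∣ L - s n := by
  have stable : ∀ m n, m ≤ n → coeff m (s n) = coeff m (s m) := by
    intro m n hmn
    induction n, hmn using Nat.le_induction with
    | base => rfl
    | succ n hmn ih =>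
      rw [← ih, ← sub_eq_zero, ← map_sub]
      exact X_pow_dvd_iff.mp (hs n) m (by omega)
  refine ⟨mk fun m => coeff m (s m), fun n => X_pow_dvd_iff.mpr fun m hm => ?_⟩
  rw [map_sub, coeff_mk, stable m n (by omega), sub_self]

end PowerSeries

theorem exists_seq_of_forall_exists_succ {α : Type*} (P : ℕ → α → Prop) (Q : ℕ → α → α → Prop)
    {x₀ : α} (h₀ : P 0 x₀) (step : ∀ n x, P n x → ∃ y, Q n x y ∧ P (n + 1) y) :
    ∃ s : ℕ → α, s 0 = x₀ ∧ ∀ n, P n (s n) ∧ Q n (s n) (s (n + 1)) := by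
  -- a total step function lets `choose` produce a successor map independent of the proofs
  have step' : ∀ n x, ∃ y, P n x → Q n x y ∧ P (n + 1) y := by
    intro n x
    by_cases hx : P n x
    · obtain ⟨y, hy⟩ := step n x hx
      exact ⟨y, fun _ => hy⟩
    · exact ⟨x, fun h => absurd h hx⟩
  choose next hnext using step'
  let s : ℕ → α := fun n => Nat.rec x₀ next n
  have hP : ∀ n, P n (s n) := fun n => by
    induction n with
    | zero => exact h₀
    | succ n ih => exact (hnext n (s n) ih).2
  exact ⟨s, rfl, fun n => ⟨hP n, (hnext n (s n) (hP n)).1⟩⟩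

section Defect

variable {R A : Type*} [Ring A]

-- the constant terms `constantCoeff ∘ d` play the role of the undeformed action `ξ`
noncomputable def intertwiningDefect (d : R → A⟦X⟧) (ψ : A⟦X⟧) (r : R) : A⟦X⟧ :=
  d r * ψ - ψ * C (constantCoeff (d r))

variable {d : R → A⟦X⟧} {n : ℕ} {ψ : A⟦X⟧}

theorem intertwiningDefect_sub (ψ ψ' : A⟦X⟧) (r : R) :
    intertwiningDefect d (ψ - ψ') r = intertwiningDefect d ψ r - intertwiningDefect d ψ' r := by
  simp only [intertwiningDefect]
  noncomm_ring

theorem X_pow_dvd_intertwiningDefect (hψ : X ^ n ∣ ψ) (r : R) :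
    X ^ n ∣ intertwiningDefect d ψ r :=
  dvd_sub (X_pow_dvd_mul_left hψ _) (dvd_mul_of_dvd_left hψ _)

theorem X_dvd_intertwiningDefect_one (r : R) : X ∣ intertwiningDefect d 1 r := by
  simp [X_dvd_iff, intertwiningDefect]

theorem coeff_intertwiningDefect_isCocycle [Mul R] (hd : ∀ r s, d (r * s) = d r * d s)
    (hψ : ∀ r, X ^ n ∣ intertwiningDefect d ψ r) (r s : R) :
    constantCoeff (d r) * coeff n (intertwiningDefect d ψ s)
      - coeff n (intertwiningDefect d ψ (r * s))
      + coeff n (intertwiningDefect d ψ r) * constantCoeff (d s) = 0 := by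
  have defect_mul : intertwiningDefect d ψ (r * s) =
      d r * intertwiningDefect d ψ s + intertwiningDefect d ψ r * C (constantCoeff (d s)) := by
    simp only [intertwiningDefect, hd, map_mul]
    noncomm_ring
  rw [defect_mul, map_add, coeff_mul_of_X_pow_dvd (hψ s), coeff_mul_C]
  abel

theorem X_pow_succ_dvd_intertwiningDefect_sub_monomial
    (hψ : ∀ r, X ^ n ∣ intertwiningDefect d ψ r) {φ : A}
    (hφ : ∀ r, coeff n (intertwiningDefect d ψ r) =
      constantCoeff (d r) * φ - φ * constantCoeff (d r)) (r : R) :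
    X ^ (n + 1) ∣ intertwiningDefect d (ψ - monomial n φ) r := by
  have hM := X_pow_dvd_monomial n φ
  rw [intertwiningDefect_sub]
  refine X_pow_succ_dvd_of_coeff_eq_zero (dvd_sub (hψ r) (X_pow_dvd_intertwiningDefect hM r)) ?_
  rw [map_sub, hφ, intertwiningDefect, map_sub, coeff_mul_of_X_pow_dvd hM, coeff_mul_C,
    coeff_monomial_same, sub_self]

end Defect

section Deformation

variable {k R A : Type*} [CommSemiring k] [NonUnitalNonAssocSemiring R] [Module k R]
  [Ring A] [Algebra k A] (D : ℕ → R →ₗ[k] A)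

def deformationSeries (r : R) : A⟦X⟧ :=
  mk fun n => D n r

@[simp]
theorem constantCoeff_deformationSeries (r : R) : constantCoeff (deformationSeries D r) = D 0 r := by
  simp [deformationSeries]

theorem deformationSeries_mul
    (hmul : ∀ n r s, D n (r * s) = ∑ p ∈ antidiagonal n, D p.1 r * D p.2 s) (r s : R) :
    deformationSeries D (r * s) = deformationSeries D r * deformationSeries D s := by
  ext n
  simp [deformationSeries, coeff_mul, hmul]

-- the constant terms `constantCoeff ∘ d` play the role of the undeformed action `ξ`
noncomputable def intertwiningDefectCoeff (ψ : A⟦X⟧) (n : ℕ) : R →ₗ[k] A :=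
  ∑ p ∈ antidiagonal n, LinearMap.mulRight k (coeff p.2 ψ) ∘ₗ D p.1
    - LinearMap.mulLeft k (coeff n ψ) ∘ₗ D 0

theorem intertwiningDefectCoeff_apply (ψ : A⟦X⟧) (n : ℕ) (r : R) :
    intertwiningDefectCoeff D ψ n r = coeff n (intertwiningDefect (deformationSeries D) ψ r) := by
  rw [intertwiningDefect, map_sub, coeff_mul_C, coeff_mul]
  simp [intertwiningDefectCoeff, deformationSeries]

variable {D}

theorem exists_X_pow_succ_dvd_intertwiningDefect
    (hmul : ∀ n r s, D n (r * s) = ∑ p ∈ antidiagonal n, D p.1 r * D p.2 s)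
    (hH1 : ∀ f : R →ₗ[k] A, (∀ r s, D 0 r * f s - f (r * s) + f r * D 0 s = 0) →
      ∃ φ, ∀ r, f r = D 0 r * φ - φ * D 0 r)
    {n : ℕ} {ψ : A⟦X⟧} (hψ : ∀ r, X ^ n ∣ intertwiningDefect (deformationSeries D) ψ r) :
    ∃ ψ', X ^ n ∣ ψ' - ψ ∧ ∀ r, X ^ (n + 1) ∣ intertwiningDefect (deformationSeries D) ψ' r := by
  have hcocycle := coeff_intertwiningDefect_isCocycle (deformationSeries_mul D hmul) hψ
  obtain ⟨φ, hφ⟩ := hH1 (intertwiningDefectCoeff D ψ n) fun r s => by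
    simpa [intertwiningDefectCoeff_apply] using hcocycle r s
  refine ⟨ψ - monomial n φ, ?_, X_pow_succ_dvd_intertwiningDefect_sub_monomial hψ fun r => ?_⟩
  · rw [sub_sub_cancel_left, dvd_neg]
    exact X_pow_dvd_monomial n φ
  · simpa [intertwiningDefectCoeff_apply] using hφ r

theorem exists_intertwiner_of_H1_eq_zero {ξ : R →ₗ[k] A} (hD0 : D 0 = ξ)
    (hmul : ∀ n r s, D n (r * s) = ∑ p ∈ antidiagonal n, D p.1 r * D p.2 s)
    (hH1 : ∀ f : R →ₗ[k] A, (∀ r s, ξ r * f s - f (r * s) + f r * ξ s = 0) →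
      ∃ φ, ∀ r, f r = ξ r * φ - φ * ξ r) :
    ∃ Φ : A⟦X⟧, constantCoeff Φ = 1 ∧ ∀ r, Φ * C (ξ r) = deformationSeries D r * Φ := by
  subst hD0
  obtain ⟨s, hs0, hs⟩ := exists_seq_of_forall_exists_succ
    (fun n ψ => ∀ r, X ^ (n + 1) ∣ intertwiningDefect (deformationSeries D) ψ r)
    (fun n ψ ψ' => X ^ (n + 1) ∣ ψ' - ψ)
    (by simpa using X_dvd_intertwiningDefect_one)
    (fun n _ hψ => exists_X_pow_succ_dvd_intertwiningDefect hmul hH1 hψ)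
  obtain ⟨Φ, hΦ⟩ := exists_X_pow_dvd_sub_of_X_pow_dvd_succ_sub s fun n => (hs n).2
  refine ⟨Φ, ?_, fun r => ?_⟩
  · simpa [X_dvd_iff, sub_eq_zero, hs0] using hΦ 0
  · have hdefect : intertwiningDefect (deformationSeries D) Φ r = 0 := by
      refine eq_zero_of_forall_X_pow_dvd fun n => (pow_dvd_pow X n.le_succ).trans ?_
      have h := dvd_add (X_pow_dvd_intertwiningDefect (d := deformationSeries D) (hΦ n) r)
        ((hs n).1 r)
      rwa [intertwiningDefect_sub, sub_add_cancel] at h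
    rw [intertwiningDefect, sub_eq_zero, constantCoeff_deformationSeries] at hdefect
    exact hdefect.symm

end Deformation

/-- If H¹_k(R, End(M)) = 0 (every Hochschild 1-cocycle is a
1-coboundary), then M is rigid: every formal deformation of M is equivalent to the
trivial deformation ξ. -/
theorem rigid_of_H1_vanishes
    {k R M : Type*} [CommRing k] [Ring R] [Algebra k R]
    [AddCommGroup M] [Module k M]
    (ξ : R →ₐ[k] Module.End k M)
    (hH1 : ∀ f : R →ₗ[k] Module.End k M,
      (∀ r s : R, ξ r * f s - f (r * s) + f r * ξ s = 0) →
      ∃ φ : Module.End k M, ∀ r : R, f r = ξ r * φ - φ * ξ r) :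
    ∀ D : ℕ → (R →ₗ[k] Module.End k M),
      D 0 = ξ.toLinearMap →
      (∀ (n : ℕ) (r s : R),
        D n (r * s) = ∑ p ∈ Finset.HasAntidiagonal.antidiagonal n, D p.1 r * D p.2 s) →
      ∃ Φ : ℕ → Module.End k M, Φ 0 = 1 ∧
        ∀ r : R,
          PowerSeries.mk Φ * PowerSeries.C (R := Module.End k M) (ξ r) =
            PowerSeries.mk (fun n => D n r) * PowerSeries.mk Φ := by
  intro D hD0 hmul
  obtain ⟨Φ, hΦ0, hΦ⟩ := exists_intertwiner_of_H1_eq_zero hD0 hmul hH1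
  have hmk : mk (fun n => coeff n Φ) = Φ := ext fun n => coeff_mk n _
  refine ⟨fun n => coeff n Φ, by simpa using hΦ0, fun r => ?_⟩
  rw [hmk]
  exact hΦ r
end

section
/- Let ξ_t = ξ + tξ₁ + ⋯ + t^m ξ_m be an approximate deformation of M of order m. Then the map Obs(ξ_t) : R ⊗ R → End(M) given by Obs(ξ_t)(a⊗b) = Σ_{i=1}^m ξᵢ(a) ξ_{m+1−i}(b) is a Hochschild 2-cocycle: ξ(a)Obs(b⊗c) − Obs(ab⊗c) + Obs(a⊗bc) − Obs(a⊗b)ξ(c) = 0 for all a,b,c ∈ R. -/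
/-!
Put `ξ_t(r) = ∑_{i ≤ m} tⁱ ξᵢ(r)` (`deformationPoly`), a polynomial in `t` over `End(M)`. The
multiplicativity conditions up to order `m` say exactly that the defect
`E(r, s) = ξ_t(r) ξ_t(s) - ξ_t(rs)` is divisible by `t^{m+1}`, and its `t^{m+1}`-coefficient is
`Obs(r, s)`. Associativity gives the exact identity
`ξ_t(a) E(b, c) - E(ab, c) + E(a, bc) - E(a, b) ξ_t(c) = 0`; since every `E` is divisible by
`t^{m+1}`, only the constant terms `ξ(a)`, `ξ(c)` of `ξ_t(a)`, `ξ_t(c)` survive in its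
`t^{m+1}`-coefficient, which is the cocycle identity for `Obs`.
-/

open Finset

namespace Polynomial

variable {A : Type*} [Semiring A] {n : ℕ}

theorem coeff_mul_of_X_pow_dvd_right (p : A[X]) {q : A[X]} (hq : X ^ n ∣ q) :
    (p * q).coeff n = p.coeff 0 * q.coeff n := by
  obtain ⟨q, rfl⟩ := hq
  rw [← mul_assoc, ← (commute_X_pow p n).eq, mul_assoc, coeff_X_pow_mul', coeff_X_pow_mul',
    if_pos le_rfl, if_pos le_rfl, Nat.sub_self, mul_coeff_zero]

theorem coeff_mul_of_X_pow_dvd_left {p : A[X]} (hp : X ^ n ∣ p) (q : A[X]) :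
    (p * q).coeff n = p.coeff n * q.coeff 0 := by
  obtain ⟨p, rfl⟩ := hp
  rw [mul_assoc, coeff_X_pow_mul', coeff_X_pow_mul', if_pos le_rfl, if_pos le_rfl, Nat.sub_self,
    mul_coeff_zero]

end Polynomial

open Polynomial

section Deformation

variable {R A : Type*} [Ring A] (D : ℕ → R → A) (m : ℕ)

noncomputable def deformationPoly (r : R) : A[X] :=
  ∑ i ∈ range (m + 1), monomial i (D i r)

variable {D m}

theorem coeff_deformationPoly (r : R) (n : ℕ) :
    (deformationPoly D m r).coeff n = if n ≤ m then D n r else 0 := by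
  simp [deformationPoly, coeff_monomial]

variable [Semigroup R]

variable (D m) in
noncomputable def deformationDefect (r s : R) : A[X] :=
  deformationPoly D m r * deformationPoly D m s - deformationPoly D m (r * s)

theorem deformationDefect_cocycle (a b c : R) :
    deformationPoly D m a * deformationDefect D m b c - deformationDefect D m (a * b) c
      + deformationDefect D m a (b * c) - deformationDefect D m a b * deformationPoly D m c
      = 0 := by
  simp only [deformationDefect, mul_sub, sub_mul, mul_assoc]
  abel

theorem X_pow_dvd_deformationDefect
    (hmul : ∀ n ≤ m, ∀ r s : R, D n (r * s) = ∑ p ∈ antidiagonal n, D p.1 r * D p.2 s)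
    (r s : R) : X ^ (m + 1) ∣ deformationDefect D m r s := by
  refine X_pow_dvd_iff.2 fun n hn => ?_
  have hnm : n ≤ m := Nat.lt_succ_iff.1 hn
  rw [deformationDefect, coeff_sub, coeff_mul, coeff_deformationPoly, if_pos hnm, hmul n hnm,
    sub_eq_zero]
  refine sum_congr rfl fun p hp => ?_
  have hsum : p.1 + p.2 = n := mem_antidiagonal.1 hp
  rw [coeff_deformationPoly, coeff_deformationPoly, if_pos (by omega), if_pos (by omega)]

theorem coeff_deformationDefect_succ (r s : R) :
    (deformationDefect D m r s).coeff (m + 1) = ∑ i ∈ Icc 1 m, D i r * D (m + 1 - i) s := by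
  rw [deformationDefect, coeff_sub, coeff_mul, coeff_deformationPoly, if_neg (by omega), sub_zero,
    Nat.sum_antidiagonal_eq_sum_range_succ
      (fun i j => (deformationPoly D m r).coeff i * (deformationPoly D m s).coeff j)]
  symm
  refine sum_subset_zero_on_sdiff (fun i hi => ?_) (fun i hi => ?_) (fun i hi => ?_)
  · simp only [mem_Icc] at hi
    simp only [mem_range]
    omega
  · simp only [mem_sdiff, mem_range, mem_Icc] at hi
    rcases (show i = 0 ∨ i = m + 1 by omega) with rfl | rfl <;> simp [coeff_deformationPoly]
  · simp only [mem_Icc] at hi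
    simp only [coeff_deformationPoly, if_pos hi.2, if_pos (show m + 1 - i ≤ m by omega)]

end Deformation

/-- The obstruction Obs(ξ_t)(a⊗b) = Σ_{i=1}^m ξᵢ(a)ξ_{m+1−i}(b) of an
order-m approximate deformation is a Hochschild 2-cocycle. -/
theorem obstruction_is_two_cocycle
    {k R M : Type*} [CommRing k] [Ring R] [Algebra k R]
    [AddCommGroup M] [Module k M]
    (ξ : R →ₐ[k] Module.End k M) (m : ℕ)
    (D : ℕ → (R →ₗ[k] Module.End k M))
    (hD0 : D 0 = ξ.toLinearMap)
    (hmul : ∀ n ≤ m, ∀ r s : R,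
      D n (r * s) = ∑ p ∈ Finset.HasAntidiagonal.antidiagonal n, D p.1 r * D p.2 s) :
    ∀ a b c : R,
      ξ a * (∑ i ∈ Finset.Icc 1 m, D i b * D (m + 1 - i) c)
        - (∑ i ∈ Finset.Icc 1 m, D i (a * b) * D (m + 1 - i) c)
        + (∑ i ∈ Finset.Icc 1 m, D i a * D (m + 1 - i) (b * c))
        - (∑ i ∈ Finset.Icc 1 m, D i a * D (m + 1 - i) b) * ξ c = 0 := by
  intro a b c
  have hdvd := X_pow_dvd_deformationDefect (D := fun i r => D i r) hmul
  have h := congrArg (coeff · (m + 1))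
    (deformationDefect_cocycle (D := fun i r => D i r) (m := m) a b c)
  rw [coeff_sub, coeff_add, coeff_sub, coeff_mul_of_X_pow_dvd_right _ (hdvd b c),
    coeff_mul_of_X_pow_dvd_left (hdvd a b) _, coeff_deformationPoly, coeff_deformationPoly,
    coeff_deformationDefect_succ, coeff_deformationDefect_succ, coeff_deformationDefect_succ,
    coeff_deformationDefect_succ] at h
  simpa [hD0] using h
end

section
/- If the second Hochschild cohomology group H²_k(R, End(M)) vanishes, then every approximate deformation of M of order m (m ≥ 1) extends to a full formal deformation of M. -/
/-!
Write `ξ_t(r) = ∑ tʲ Dⱼ(r)` in `A⟦t⟧`. If `ξ_t` is multiplicative modulo `tⁿ⁺¹`, the coefficient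
of `tⁿ⁺¹` in `ξ_t(a) ξ_t(b) - ξ_t(ab)` is a Hochschild 2-cocycle: expanding `ξ_t(a) ξ_t(b) ξ_t(c)`
under both bracketings and comparing coefficients of `tⁿ⁺¹` is exactly the cocycle identity.
Changing `Dₙ₊₁` by `g` changes this defect by the coboundary of `g` and leaves the lower orders
alone, so when every cocycle is a coboundary the defect can be removed order by order above `m`.
-/

open Finset PowerSeries

namespace PowerSeries

variable {A : Type*} [Ring A] {n : ℕ} {E : A⟦X⟧}

theorem coeff_succ_mul_eq_constantCoeff_mul (hE : ∀ j ≤ n, coeff j E = 0) (F : A⟦X⟧) :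
    coeff (n + 1) (F * E) = constantCoeff F * coeff (n + 1) E := by
  rw [coeff_mul, Nat.sum_antidiagonal_succ, coeff_zero_eq_constantCoeff_apply, add_eq_left]
  exact sum_eq_zero fun p hp => by rw [hE p.2 (HasAntidiagonal.antidiagonal.snd_le hp), mul_zero]

theorem coeff_succ_mul_eq_mul_constantCoeff (hE : ∀ j ≤ n, coeff j E = 0) (F : A⟦X⟧) :
    coeff (n + 1) (E * F) = coeff (n + 1) E * constantCoeff F := by
  rw [coeff_mul, Nat.sum_antidiagonal_succ', coeff_zero_eq_constantCoeff_apply, add_eq_left]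
  exact sum_eq_zero fun p hp => by rw [hE p.1 (HasAntidiagonal.antidiagonal.fst_le hp), zero_mul]

end PowerSeries

namespace Deformation

variable {k R A : Type*} [CommRing k] [Ring R] [Algebra k R] [Ring A] [Algebra k A]

def IsHochschildCocycle (μ : R → A) (B : R →ₗ[k] R →ₗ[k] A) : Prop :=
  ∀ a b c, μ a * B b c - B (a * b) c + B a (b * c) - B a b * μ c = 0

def hochschildCoboundary (μ : R → A) (f : R →ₗ[k] A) (a b : R) : A :=
  μ a * f b - f (a * b) + f a * μ b

variable (D : ℕ → R →ₗ[k] A) (n : ℕ)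

def IsMultiplicativeUpTo : Prop :=
  ∀ j ≤ n, ∀ r s : R, D j (r * s) = ∑ p ∈ antidiagonal j, D p.1 r * D p.2 s

def toSeries (r : R) : A⟦X⟧ := PowerSeries.mk fun j => D j r

def mulDefect : R →ₗ[k] R →ₗ[k] A :=
  ∑ p ∈ antidiagonal n, (LinearMap.mul k A).compl₁₂ (D p.1) (D p.2) -
    (LinearMap.mul k R).compr₂ (D n)

def truncate : ℕ → R →ₗ[k] A := fun i => if i < n then D i else 0

variable {D n} {D' : ℕ → R →ₗ[k] A}

theorem mulDefect_apply (r s : R) :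
    mulDefect D n r s = ∑ p ∈ antidiagonal n, D p.1 r * D p.2 s - D n (r * s) := by
  simp [mulDefect]

theorem coeff_toSeries (j : ℕ) (r : R) : coeff j (toSeries D r) = D j r := coeff_mk _ _

theorem constantCoeff_toSeries (r : R) : constantCoeff (toSeries D r) = D 0 r := by
  rw [← coeff_zero_eq_constantCoeff_apply, coeff_toSeries]

theorem coeff_toSeries_mul_sub (r s : R) :
    coeff n (toSeries D r * toSeries D s - toSeries D (r * s)) = mulDefect D n r s := by
  simp [mulDefect_apply, coeff_mul, coeff_toSeries]

theorem IsMultiplicativeUpTo.mono {m : ℕ} (hD : IsMultiplicativeUpTo D m) (h : n ≤ m) :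
    IsMultiplicativeUpTo D n :=
  fun j hj => hD j (hj.trans h)

theorem IsMultiplicativeUpTo.congr (hD : IsMultiplicativeUpTo D n) (h : ∀ j ≤ n, D' j = D j) :
    IsMultiplicativeUpTo D' n := by
  intro j hj r s
  rw [h j hj, hD j hj]
  refine sum_congr rfl fun p hp => ?_
  rw [h p.1 ((HasAntidiagonal.antidiagonal.fst_le hp).trans hj),
    h p.2 ((HasAntidiagonal.antidiagonal.snd_le hp).trans hj)]

theorem IsMultiplicativeUpTo.coeff_toSeries_mul_sub_eq_zero (hD : IsMultiplicativeUpTo D n)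
    (r s : R) :
    ∀ j ≤ n, coeff j (toSeries D r * toSeries D s - toSeries D (r * s)) = 0 := by
  intro j hj
  rw [coeff_toSeries_mul_sub, mulDefect_apply, hD j hj, sub_self]

theorem IsMultiplicativeUpTo.isHochschildCocycle_mulDefect (hD : IsMultiplicativeUpTo D n) :
    IsHochschildCocycle (D 0) (mulDefect D (n + 1)) := by
  intro a b c
  set S := toSeries D
  have hE := hD.coeff_toSeries_mul_sub_eq_zero
  have assoc := congrArg (coeff (n + 1)) (mul_assoc (S a) (S b) (S c))
  have expand_left : S a * S b * S c = S (a * b * c) + (S (a * b) * S c - S (a * b * c)) +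
      (S a * S b - S (a * b)) * S c := by noncomm_ring
  have expand_right : S a * (S b * S c) = S (a * b * c) + (S a * S (b * c) - S (a * (b * c))) +
      S a * (S b * S c - S (b * c)) := by rw [mul_assoc a]; noncomm_ring
  rw [expand_left, expand_right, map_add, map_add, map_add, map_add,
    coeff_succ_mul_eq_constantCoeff_mul (hE b c), coeff_succ_mul_eq_mul_constantCoeff (hE a b),
    constantCoeff_toSeries, constantCoeff_toSeries] at assoc
  simp only [S, coeff_toSeries_mul_sub] at assoc
  rw [← sub_eq_zero.mpr assoc.symm]
  abel

theorem mulDefect_succ_sub_mulDefect_succ (h : ∀ j ≤ n, D' j = D j) (a b : R) :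
    mulDefect D' (n + 1) a b - mulDefect D (n + 1) a b =
      hochschildCoboundary (D 0) (D' (n + 1) - D (n + 1)) a b := by
  set G := fun r => toSeries D' r - toSeries D r
  have hG : ∀ r, ∀ j ≤ n, coeff j (G r) = 0 := fun r j hj => by
    simp only [G, map_sub, coeff_toSeries, h j hj, sub_self]
  have expand := congrArg (coeff (n + 1)) <| show
    (toSeries D' a * toSeries D' b - toSeries D' (a * b)) -
      (toSeries D a * toSeries D b - toSeries D (a * b)) =
      toSeries D a * G b + G a * toSeries D b + G a * G b - G (a * b) by simp only [G]; noncomm_ring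
  rw [map_sub, coeff_toSeries_mul_sub, coeff_toSeries_mul_sub] at expand
  rw [expand, map_sub, map_add, map_add, coeff_succ_mul_eq_constantCoeff_mul (hG b),
    coeff_succ_mul_eq_mul_constantCoeff (hG a), coeff_succ_mul_eq_constantCoeff_mul (hG b),
    ← coeff_zero_eq_constantCoeff_apply (G a), hG a 0 n.zero_le, zero_mul, add_zero]
  simp only [hochschildCoboundary, G, map_sub, coeff_toSeries, constantCoeff_toSeries,
    LinearMap.sub_apply, mul_sub, sub_mul]
  abel

theorem IsMultiplicativeUpTo.succ (hD : IsMultiplicativeUpTo D n) (h : ∀ j ≤ n, D' j = D j)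
    {f : R →ₗ[k] A} (hf : ∀ a b, mulDefect D (n + 1) a b = hochschildCoboundary (D 0) f a b)
    (hD' : D' (n + 1) = D (n + 1) - f) : IsMultiplicativeUpTo D' (n + 1) := by
  intro j hj r s
  rcases hj.lt_or_eq with hj | rfl
  · exact hD.congr h j (Nat.le_of_lt_succ hj) r s
  have hzero : mulDefect D' (n + 1) r s = 0 := calc
    _ = (mulDefect D' (n + 1) r s - mulDefect D (n + 1) r s) + mulDefect D (n + 1) r s :=
      (sub_add_cancel _ _).symm
    _ = 0 := by
      rw [mulDefect_succ_sub_mulDefect_succ h, hD', sub_sub_cancel_left, hf]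
      simp only [hochschildCoboundary, LinearMap.neg_apply, mul_neg, neg_mul]
      abel
  rwa [mulDefect_apply, sub_eq_zero, eq_comm] at hzero

-- Coefficient `n` is zeroed before taking the defect, leaving the obstruction
-- `∑_{0 < p < n} Dₚ(a) Dₙ₋ₚ(b)`, of which `σ` supplies a primitive.
noncomputable def extension (D : ℕ → R →ₗ[k] A) (m : ℕ)
    (σ : (R →ₗ[k] R →ₗ[k] A) → R →ₗ[k] A) (n : ℕ) : R →ₗ[k] A :=
  if n ≤ m then D n
  else -σ (mulDefect (fun i => if i < n then extension D m σ i else 0) n)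
termination_by n
decreasing_by assumption

variable {m : ℕ} {σ : (R →ₗ[k] R →ₗ[k] A) → R →ₗ[k] A}

theorem extension_of_le (h : n ≤ m) : extension D m σ n = D n := by
  rw [extension, if_pos h]

theorem extension_of_lt (h : m < n) :
    extension D m σ n = -σ (mulDefect (truncate (extension D m σ) n) n) := by
  rw [extension, if_neg h.not_ge]
  rfl

theorem isMultiplicativeUpTo_extension
    (hσ : ∀ B, IsHochschildCocycle (D 0) B → ∀ a b, B a b = hochschildCoboundary (D 0) (σ B) a b)
    (hD : IsMultiplicativeUpTo D m) (n : ℕ) : IsMultiplicativeUpTo (extension D m σ) n := by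
  have base : IsMultiplicativeUpTo (extension D m σ) m :=
    hD.congr fun j hj => extension_of_le hj
  have step (n : ℕ) (hmn : m ≤ n) (ih : IsMultiplicativeUpTo (extension D m σ) n) :
      IsMultiplicativeUpTo (extension D m σ) (n + 1) := by
    set T := truncate (extension D m σ) (n + 1)
    have hT : ∀ j ≤ n, T j = extension D m σ j := fun j hj => if_pos (Nat.lt_succ_of_le hj)
    have hT0 : T 0 = D 0 := (hT 0 n.zero_le).trans (extension_of_le m.zero_le)
    have hTmul : IsMultiplicativeUpTo T n := ih.congr hT
    refine hTmul.succ (fun j hj => (hT j hj).symm) (f := σ (mulDefect T (n + 1))) ?_ ?_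
    · rw [hT0]
      exact hσ _ (hT0 ▸ hTmul.isHochschildCocycle_mulDefect)
    · rw [extension_of_lt (Nat.lt_succ_of_le hmn)]
      simp [T, truncate]
  rcases le_total n m with h | h
  · exact base.mono h
  · exact Nat.le_induction base step n h

end Deformation

open Deformation in
/-- If H²_k(R, End(M)) = 0 (every Hochschild 2-cocycle is a
2-coboundary), then every approximate deformation of order m ≥ 1 extends to a full
formal deformation. -/
theorem approximate_extends_of_H2_vanishes
    {k R M : Type*} [CommRing k] [Ring R] [Algebra k R]
    [AddCommGroup M] [Module k M]
    (ξ : R →ₐ[k] Module.End k M)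
    (hH2 : ∀ B : R →ₗ[k] R →ₗ[k] Module.End k M,
      (∀ a b c : R,
        ξ a * B b c - B (a * b) c + B a (b * c) - B a b * ξ c = 0) →
      ∃ f : R →ₗ[k] Module.End k M, ∀ a b : R,
        B a b = ξ a * f b - f (a * b) + f a * ξ b) :
    ∀ (m : ℕ), 1 ≤ m →
      ∀ D : ℕ → (R →ₗ[k] Module.End k M),
        D 0 = ξ.toLinearMap →
        (∀ n ≤ m, ∀ r s : R,
          D n (r * s) = ∑ p ∈ Finset.HasAntidiagonal.antidiagonal n, D p.1 r * D p.2 s) →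
        ∃ D' : ℕ → (R →ₗ[k] Module.End k M),
          (∀ i ≤ m, D' i = D i) ∧
          D' 0 = ξ.toLinearMap ∧
          (∀ (n : ℕ) (r s : R),
            D' n (r * s) = ∑ p ∈ Finset.HasAntidiagonal.antidiagonal n, D' p.1 r * D' p.2 s) := by
  intro m _ D hD0 hD
  have primitive (B : R →ₗ[k] R →ₗ[k] Module.End k M) :
      ∃ f : R →ₗ[k] Module.End k M,
        IsHochschildCocycle ξ B → ∀ a b, B a b = hochschildCoboundary ξ f a b := by
    by_cases hB : IsHochschildCocycle ξ B
    · exact (hH2 B hB).imp fun _ hf _ => hf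
    · exact ⟨0, fun h => absurd h hB⟩
  choose σ hσ using primitive
  have hξ : ⇑(D 0) = ⇑ξ := by rw [hD0]; rfl
  have hmul := isMultiplicativeUpTo_extension (hξ ▸ hσ) hD
  exact ⟨extension D m σ, fun i hi => extension_of_le hi,
    (extension_of_le m.zero_le).trans hD0, fun n => hmul n n le_rfl⟩
end
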